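/- Let 0 < δ < 2 and 0 < λ < 1/(1 + δ/4). Let ĝ(x) = Σ_{i=1}^n h(x_i,a) be the first-layer function of the preceding corollary with range parameter R = √(log(1/λ)) and accuracy parameter ν = (1/n)·log(1 + δ/4), where h is built from an activation σ satisfying: σ is three times differentiable on [τ−r, τ+r] with σ''(τ) > 0 and |σ'''| ≤ M there, x ↦ σ(x+τ)+σ(−x+τ) is increasing for x ≥ 0, and a ≥ max(2R/r, 8MR³/(3ν·σ''(τ)), 4MR/(3σ''(τ))). Let ψ(·,σ₂) be a second-layer supernode function satisfying |ψ(x,σ₂) − exp(−x)| ≤ (δ/2)·exp(−x) for 0 ≤ x ≤ T and 0 ≤ ψ(x,σ₂) ≤ exp(−T)·(1 + δ/2) for x ≥ T, with range parameter T = 4R². Define ĉ(x) = ψ(ĝ(x), σ₂) and c(x) = exp(−g(x)) with g(x) = Σ_{i=1}^n x_i². Then: (i) |ĉ(x) − c(x)| < δ·c(x) whenever c(x) ≥ λ; and (ii) ĉ(x) < λ(1+δ) whenever c(x) < λ. -/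

import Mathlib

/-!
A third-order Taylor bound for the symmetric second difference `σ(τ + y) + σ(τ - y) - 2σ(τ)` makes
each supernode `h(x, a)` a `ν`-approximation of `x²` for `|x| ≤ 2R`. Summing over the `n`
coordinates gives `|ĝ - g| ≤ log(1 + δ/4)`, so `exp(-ĝ)` and `exp(-g)` agree up to a factor
`1 + δ/4`, and the second layer costs a further factor `1 + δ/2`; for `δ < 2` the total stays
below `1 + δ`. When `c(x) < λ`, i.e. `g(x) > R²`, either all coordinates lie in `[-2R, 2R]` and
`ĝ ≥ g - log(1 + δ/4)`, or one of them does not and, `h` being nonnegative and increasing in `|x|`,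
`ĝ ≥ h(2R) ≥ 4R² - ν`; either way `exp(-ĝ) ≤ λ(1 + δ/4)`.
-/

open Set

theorem abs_le_of_hasDerivAt_of_abs_le_pow {f f' : ℝ → ℝ} {r C : ℝ} (k : ℕ) (hf0 : f 0 = 0)
    (hf : ∀ t ∈ Icc 0 r, HasDerivAt f (f' t) t) (hf' : ∀ t ∈ Icc 0 r, |f' t| ≤ C * t ^ k) :
    ∀ t ∈ Icc 0 r, |f t| ≤ C / (k + 1) * t ^ (k + 1) := by
  have hB (t : ℝ) : HasDerivAt (fun t ↦ C / (k + 1) * t ^ (k + 1)) (C * t ^ k) t :=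
    ((hasDerivAt_pow (k + 1) t).const_mul (C / (k + 1))).congr_deriv (by
      push_cast
      field_simp)
  intro t ht
  simpa only [Real.norm_eq_abs] using image_norm_le_of_norm_deriv_right_le_deriv_boundary
    (fun t ht ↦ (hf t ht).continuousAt.continuousWithinAt)
    (fun t ht ↦ (hf t (Ico_subset_Icc_self ht)).hasDerivWithinAt)
    (by simp [hf0]) hB (fun t ht ↦ hf' t (Ico_subset_Icc_self ht)) ht

theorem abs_second_difference_sub_le {σ σ' σ'' σ''' : ℝ → ℝ} {τ r M : ℝ}
    (hσ : ∀ x ∈ Icc (τ - r) (τ + r), HasDerivAt σ (σ' x) x)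
    (hσ' : ∀ x ∈ Icc (τ - r) (τ + r), HasDerivAt σ' (σ'' x) x)
    (hσ'' : ∀ x ∈ Icc (τ - r) (τ + r), HasDerivAt σ'' (σ''' x) x)
    (hσ''' : ∀ x ∈ Icc (τ - r) (τ + r), |σ''' x| ≤ M) {y : ℝ} (hy : y ∈ Icc 0 r) :
    |σ (τ + y) + σ (τ - y) - 2 * σ τ - σ'' τ * y ^ 2| ≤ M / 3 * y ^ 3 := by
  have hmem (t : ℝ) (ht : t ∈ Icc 0 r) :
      τ + t ∈ Icc (τ - r) (τ + r) ∧ τ - t ∈ Icc (τ - r) (τ + r) := by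
    obtain ⟨ht₀, htr⟩ := ht
    exact ⟨⟨by linarith, by linarith⟩, ⟨by linarith, by linarith⟩⟩
  -- The bound `|σ'''| ≤ M` is integrated three times from `0`, where all three differences vanish.
  have h₂ := abs_le_of_hasDerivAt_of_abs_le_pow (C := 2 * M) 0
    (f := fun t ↦ σ'' (τ + t) + σ'' (τ - t) - 2 * σ'' τ)
    (f' := fun t ↦ σ''' (τ + t) + -σ''' (τ - t)) (by simp; ring)
    (fun t ht ↦ ((((hσ'' _ (hmem t ht).1).comp_const_add τ t).add
      ((hσ'' _ (hmem t ht).2).comp_const_sub τ t)).sub_const _))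
    (fun t ht ↦ by
      have := hσ''' _ (hmem t ht).1
      have := hσ''' _ (hmem t ht).2
      simp only [pow_zero, mul_one]
      exact (abs_add_le _ _).trans (by rw [abs_neg]; linarith))
  have h₁ := abs_le_of_hasDerivAt_of_abs_le_pow (C := 2 * M) 1
    (f := fun t ↦ σ' (τ + t) - σ' (τ - t) - 2 * σ'' τ * t)
    (f' := fun t ↦ σ'' (τ + t) + σ'' (τ - t) - 2 * σ'' τ) (by simp)
    (fun t ht ↦ ((((hσ' _ (hmem t ht).1).comp_const_add τ t).sub
        ((hσ' _ (hmem t ht).2).comp_const_sub τ t)).sub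
        ((hasDerivAt_id' t).const_mul (2 * σ'' τ))).congr_deriv (by ring))
    (fun t ht ↦ by simpa using h₂ t ht)
  have h₀ := abs_le_of_hasDerivAt_of_abs_le_pow (C := M) 2
    (f := fun t ↦ σ (τ + t) + σ (τ - t) - 2 * σ τ - σ'' τ * t ^ 2)
    (f' := fun t ↦ σ' (τ + t) - σ' (τ - t) - 2 * σ'' τ * t) (by simp; ring)
    (fun t ht ↦ (((((hσ _ (hmem t ht).1).comp_const_add τ t).add
        ((hσ _ (hmem t ht).2).comp_const_sub τ t)).sub_const (2 * σ τ)).sub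
        ((hasDerivAt_pow 2 t).const_mul (σ'' τ))).congr_deriv (by simp; ring))
    (fun t ht ↦ by convert h₁ t ht using 1; norm_num)
  convert h₀ y hy using 1
  norm_num

/-- The supernode `h(x, a)` of the paper, with `κ` in place of `σ''(τ)`. -/
noncomputable def supernode (σ : ℝ → ℝ) (κ τ a x : ℝ) : ℝ :=
  a ^ 2 / κ * (σ (x / a + τ) + σ (-x / a + τ) - 2 * σ τ)

theorem apply_add_apply_neg_eq_abs (σ : ℝ → ℝ) (τ z : ℝ) :
    σ (z + τ) + σ (-z + τ) = σ (|z| + τ) + σ (-|z| + τ) := by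
  rcases abs_choice z with h | h <;> rw [h]
  rw [neg_neg, add_comm]

theorem supernode_zero (σ : ℝ → ℝ) (κ τ a : ℝ) : supernode σ κ τ a 0 = 0 := by
  simp only [supernode, zero_div, neg_zero, zero_add]
  ring

theorem supernode_le_supernode {σ : ℝ → ℝ} {κ τ a x y : ℝ} (hκ : 0 ≤ κ)
    (hmono : MonotoneOn (fun z ↦ σ (z + τ) + σ (-z + τ)) (Ici 0)) (hxy : |x| ≤ |y|) :
    supernode σ κ τ a x ≤ supernode σ κ τ a y := by
  simp only [supernode, neg_div, apply_add_apply_neg_eq_abs σ τ (x / a),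
    apply_add_apply_neg_eq_abs σ τ (y / a)]
  refine mul_le_mul_of_nonneg_left (sub_le_sub_right ?_ _) (by positivity)
  refine hmono (abs_nonneg (x / a)) (abs_nonneg (y / a)) ?_
  rw [abs_div, abs_div]
  exact div_le_div_of_nonneg_right hxy (abs_nonneg a)

theorem supernode_nonneg {σ : ℝ → ℝ} {κ τ a : ℝ} (hκ : 0 ≤ κ)
    (hmono : MonotoneOn (fun z ↦ σ (z + τ) + σ (-z + τ)) (Ici 0)) (x : ℝ) :
    0 ≤ supernode σ κ τ a x :=
  supernode_zero σ κ τ a ▸ supernode_le_supernode hκ hmono (by simp)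

theorem abs_supernode_sub_sq_le {σ σ' σ'' σ''' : ℝ → ℝ} {τ r M : ℝ}
    (hσ : ∀ x ∈ Icc (τ - r) (τ + r), HasDerivAt σ (σ' x) x)
    (hσ' : ∀ x ∈ Icc (τ - r) (τ + r), HasDerivAt σ' (σ'' x) x)
    (hσ'' : ∀ x ∈ Icc (τ - r) (τ + r), HasDerivAt σ'' (σ''' x) x)
    (hσ''' : ∀ x ∈ Icc (τ - r) (τ + r), |σ''' x| ≤ M)
    (hκ : 0 < σ'' τ) {a x : ℝ} (ha : 0 < a) (hx : |x| ≤ a * r) :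
    |supernode σ (σ'' τ) τ a x - x ^ 2| ≤ M * |x| ^ 3 / (3 * a * σ'' τ) := by
  set y := |x| / a with hy
  have hyr : y ∈ Icc 0 r := ⟨by positivity, (div_le_iff₀' ha).2 hx⟩
  have hsplit : supernode σ (σ'' τ) τ a x - x ^ 2 =
      a ^ 2 / σ'' τ * (σ (τ + y) + σ (τ - y) - 2 * σ τ - σ'' τ * y ^ 2) := by
    rw [supernode, neg_div, apply_add_apply_neg_eq_abs, abs_div, abs_of_pos ha, ← sq_abs x,
      add_comm _ τ, neg_add_eq_sub, ← hy]
    have hay : a ^ 2 * y ^ 2 = |x| ^ 2 := by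
      rw [hy]
      field_simp
    field_simp
    rw [← hay]
    ring
  rw [hsplit, abs_mul, abs_of_nonneg (by positivity)]
  calc a ^ 2 / σ'' τ * |σ (τ + y) + σ (τ - y) - 2 * σ τ - σ'' τ * y ^ 2|
      ≤ a ^ 2 / σ'' τ * (M / 3 * y ^ 3) := by
        gcongr
        exact abs_second_difference_sub_le hσ hσ' hσ'' hσ''' hyr
    _ = M * |x| ^ 3 / (3 * a * σ'' τ) := by
        rw [hy]
        field_simp

theorem abs_supernode_sub_sq_le_of_abs_le {σ σ' σ'' σ''' : ℝ → ℝ} {τ r M : ℝ}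
    (hσ : ∀ x ∈ Icc (τ - r) (τ + r), HasDerivAt σ (σ' x) x)
    (hσ' : ∀ x ∈ Icc (τ - r) (τ + r), HasDerivAt σ' (σ'' x) x)
    (hσ'' : ∀ x ∈ Icc (τ - r) (τ + r), HasDerivAt σ'' (σ''' x) x)
    (hσ''' : ∀ x ∈ Icc (τ - r) (τ + r), |σ''' x| ≤ M)
    (hκ : 0 < σ'' τ) (hr : 0 < r) (hM : 0 ≤ M)
    {R ν a x : ℝ} (hR : 0 < R) (hν : 0 < ν) (ha₁ : 2 * R / r ≤ a)
    (ha₂ : 8 * M * R ^ 3 / (3 * ν * σ'' τ) ≤ a) (hx : |x| ≤ 2 * R) :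
    |supernode σ (σ'' τ) τ a x - x ^ 2| ≤ ν := by
  have ha : 0 < a := (by positivity : 0 < 2 * R / r).trans_le ha₁
  refine (abs_supernode_sub_sq_le hσ hσ' hσ'' hσ''' hκ ha
    (hx.trans ((div_le_iff₀ hr).1 ha₁))).trans ?_
  rw [div_le_iff₀ (by positivity)]
  rw [div_le_iff₀ (by positivity)] at ha₂
  calc M * |x| ^ 3 ≤ M * (2 * R) ^ 3 := by gcongr
    _ ≤ ν * (3 * a * σ'' τ) := by linarith

section FirstLayer

variable {ι : Type*} [Fintype ι] {φ : ℝ → ℝ} {R ν : ℝ} {x : ι → ℝ}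

theorem abs_sum_sub_sum_sq_le (hφ : ∀ x, |x| ≤ R → |φ x - x ^ 2| ≤ ν) (hx : ∀ i, |x i| ≤ R) :
    |∑ i, φ (x i) - ∑ i, x i ^ 2| ≤ Fintype.card ι * ν := by
  rw [← Finset.sum_sub_distrib]
  calc |∑ i, (φ (x i) - x i ^ 2)| ≤ ∑ i, |φ (x i) - x i ^ 2| := Finset.abs_sum_le_sum_abs _ _
    _ ≤ ∑ _i : ι, ν := Finset.sum_le_sum fun i _ ↦ hφ _ (hx i)
    _ = Fintype.card ι * ν := by simp

theorem sub_le_sum_of_lt_sum_sq (hφ : ∀ x, |x| ≤ 2 * R → |φ x - x ^ 2| ≤ ν)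
    (hφ₀ : ∀ x, 0 ≤ φ x) (hφ_mono : ∀ x y, |x| ≤ |y| → φ x ≤ φ y) (hR : 0 ≤ R) (hν : 0 ≤ ν)
    (hx : R ^ 2 < ∑ i, x i ^ 2) :
    R ^ 2 - Fintype.card ι * ν ≤ ∑ i, φ (x i) := by
  by_cases hsmall : ∀ i, |x i| ≤ 2 * R
  · linarith [(abs_le.1 (abs_sum_sub_sum_sq_le hφ hsmall)).1]
  obtain ⟨j, hj⟩ := not_forall.1 hsmall
  have h2R : |2 * R| = 2 * R := abs_of_nonneg (by positivity)
  have hφj : φ (2 * R) ≤ ∑ i, φ (x i) :=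
    (hφ_mono _ _ (by rw [h2R]; exact (not_le.1 hj).le)).trans
      (Finset.single_le_sum (fun i _ ↦ hφ₀ (x i)) (Finset.mem_univ j))
  have hφ2R := (abs_le.1 (hφ (2 * R) h2R.le)).1
  have hcard : (1 : ℝ) ≤ Fintype.card ι := Nat.one_le_cast.2 (Fintype.card_pos_iff.2 ⟨j⟩)
  nlinarith

end FirstLayer

theorem exp_neg_le_exp_neg_mul {s t b : ℝ} (hb : 0 < b) (h : t ≤ s + Real.log b) :
    Real.exp (-s) ≤ Real.exp (-t) * b := by
  rw [← Real.exp_log hb, ← Real.exp_add]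
  exact Real.exp_le_exp.2 (by linarith)

theorem one_add_div_four_mul_one_add_div_two_lt {δ : ℝ} (hδ₀ : 0 < δ) (hδ₂ : δ < 2) :
    (1 + δ / 4) * (1 + δ / 2) < 1 + δ := by
  nlinarith

theorem abs_sub_exp_neg_lt {p s t δ : ℝ} (hδ₀ : 0 < δ) (hδ₂ : δ < 2)
    (hst : |s - t| ≤ Real.log (1 + δ / 4))
    (hp : |p - Real.exp (-s)| ≤ δ / 2 * Real.exp (-s)) :
    |p - Real.exp (-t)| < δ * Real.exp (-t) := by
  have hb : (0 : ℝ) < 1 + δ / 4 := by positivity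
  obtain ⟨hst₁, hst₂⟩ := abs_le.1 hst
  have hu := exp_neg_le_exp_neg_mul (s := s) (t := t) hb (by linarith)
  have hc := exp_neg_le_exp_neg_mul (s := t) (t := s) hb (by linarith)
  obtain ⟨hp₁, hp₂⟩ := abs_le.1 hp
  have hc₀ := Real.exp_pos (-t)
  have hu₀ := Real.exp_pos (-s)
  rw [abs_lt]
  constructor
  · nlinarith [mul_le_mul_of_nonneg_left hc (by linarith : (0 : ℝ) ≤ 1 - δ / 2),
      mul_le_mul_of_nonneg_left hu (by positivity : (0 : ℝ) ≤ δ / 4),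
      mul_pos hc₀ hδ₀, mul_pos hu₀ hδ₀]
  · nlinarith [mul_le_mul_of_nonneg_left hu (by positivity : (0 : ℝ) ≤ δ / 2),
      mul_pos hc₀ hδ₀]

section SecondLayer

variable {ι : Type*} [Fintype ι] {φ ψ : ℝ → ℝ} {R ν δ : ℝ} {x : ι → ℝ}

theorem abs_comp_sum_sub_exp_neg_lt (hφ : ∀ x, |x| ≤ 2 * R → |φ x - x ^ 2| ≤ ν)
    (hφ₀ : ∀ x, 0 ≤ φ x) (hR : 0 ≤ R) (hδ₀ : 0 < δ) (hδ₂ : δ < 2)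
    (hν : Fintype.card ι * ν = Real.log (1 + δ / 4)) (hlog : Real.log (1 + δ / 4) ≤ 3 * R ^ 2)
    (hψ : ∀ x, 0 ≤ x → x ≤ 4 * R ^ 2 → |ψ x - Real.exp (-x)| ≤ δ / 2 * Real.exp (-x))
    (hx : ∑ i, x i ^ 2 ≤ R ^ 2) :
    |ψ (∑ i, φ (x i)) - Real.exp (-∑ i, x i ^ 2)| < δ * Real.exp (-∑ i, x i ^ 2) := by
  have hxi (i : ι) : |x i| ≤ 2 * R := by
    refine abs_le_of_sq_le_sq ?_ (by positivity)
    have := Finset.single_le_sum (fun j _ ↦ sq_nonneg (x j)) (Finset.mem_univ i)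
    nlinarith
  have hclose := hν ▸ abs_sum_sub_sum_sq_le hφ hxi
  have hpos : 0 ≤ ∑ i, φ (x i) := Finset.sum_nonneg fun i _ ↦ hφ₀ (x i)
  exact abs_sub_exp_neg_lt hδ₀ hδ₂ hclose
    (hψ _ hpos (by linarith [(abs_le.1 hclose).2]))

theorem comp_sum_lt_of_lt_sum_sq (hφ : ∀ x, |x| ≤ 2 * R → |φ x - x ^ 2| ≤ ν)
    (hφ₀ : ∀ x, 0 ≤ φ x) (hφ_mono : ∀ x y, |x| ≤ |y| → φ x ≤ φ y) (hR : 0 ≤ R) (hν₀ : 0 ≤ ν)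
    (hδ₀ : 0 < δ) (hδ₂ : δ < 2) (hν : Fintype.card ι * ν = Real.log (1 + δ / 4))
    (hψ : ∀ x, 0 ≤ x → x ≤ 4 * R ^ 2 → |ψ x - Real.exp (-x)| ≤ δ / 2 * Real.exp (-x))
    (hψ_tail : ∀ x, 4 * R ^ 2 ≤ x → ψ x ≤ Real.exp (-(4 * R ^ 2)) * (1 + δ / 2))
    (hx : R ^ 2 < ∑ i, x i ^ 2) :
    ψ (∑ i, φ (x i)) < Real.exp (-R ^ 2) * (1 + δ) := by
  set s := ∑ i, φ (x i)
  have hs : R ^ 2 - Real.log (1 + δ / 4) ≤ s := hν ▸ sub_le_sum_of_lt_sum_sq hφ hφ₀ hφ_mono hR hν₀ hx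
  have hu : Real.exp (-s) ≤ Real.exp (-R ^ 2) * (1 + δ / 4) :=
    exp_neg_le_exp_neg_mul (by positivity) (by linarith)
  have hδ := one_add_div_four_mul_one_add_div_two_lt hδ₀ hδ₂
  rcases le_or_gt s (4 * R ^ 2) with hsT | hsT
  · have hψs := (abs_le.1 (hψ s (Finset.sum_nonneg fun i _ ↦ hφ₀ (x i)) hsT)).2
    calc ψ s ≤ Real.exp (-s) * (1 + δ / 2) := by linarith
      _ ≤ Real.exp (-R ^ 2) * ((1 + δ / 4) * (1 + δ / 2)) := by
        rw [← mul_assoc]; gcongr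
      _ < Real.exp (-R ^ 2) * (1 + δ) := by gcongr
  · calc ψ s ≤ Real.exp (-(4 * R ^ 2)) * (1 + δ / 2) := hψ_tail s hsT.le
      _ ≤ Real.exp (-R ^ 2) * (1 + δ / 2) := by
        gcongr
        nlinarith
      _ < Real.exp (-R ^ 2) * (1 + δ) := by gcongr; linarith

end SecondLayer

theorem sqrt_log_one_div_spec {lam b R : ℝ} (hlam : 0 < lam) (hb : 1 < b) (hlamb : lam < 1 / b)
    (hR : R = Real.sqrt (Real.log (1 / lam))) :
    0 < R ∧ Real.log b < R ^ 2 ∧ Real.exp (-R ^ 2) = lam := by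
  have hb' : b < 1 / lam := by
    rw [lt_div_iff₀ hlam]
    rw [lt_div_iff₀ (by positivity)] at hlamb
    linarith
  have hlog : 0 < Real.log (1 / lam) := Real.log_pos (hb.trans hb')
  have hR2 : R ^ 2 = Real.log (1 / lam) := hR ▸ Real.sq_sqrt hlog.le
  refine ⟨hR ▸ Real.sqrt_pos.2 hlog, hR2 ▸ Real.log_lt_log (by positivity) hb', ?_⟩
  rw [hR2, one_div, Real.log_inv, neg_neg, Real.exp_log hlam]

theorem stmt6_general (n : ℕ) (hn : 0 < n)
    (σ σ' σ'' σ''' : ℝ → ℝ) (τ r M : ℝ) (hr : 0 < r) (hM : 0 < M)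
    (hder1 : ∀ x ∈ Set.Icc (τ - r) (τ + r), HasDerivAt σ (σ' x) x)
    (hder2 : ∀ x ∈ Set.Icc (τ - r) (τ + r), HasDerivAt σ' (σ'' x) x)
    (hder3 : ∀ x ∈ Set.Icc (τ - r) (τ + r), HasDerivAt σ'' (σ''' x) x)
    (hcurv : 0 < σ'' τ)
    (hbd3 : ∀ x ∈ Set.Icc (τ - r) (τ + r), |σ''' x| ≤ M)
    (hmono : ∀ x y : ℝ, 0 ≤ x → x ≤ y →
      σ (x + τ) + σ (-x + τ) ≤ σ (y + τ) + σ (-y + τ))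
    (h : ℝ → ℝ → ℝ)
    (hh : ∀ x b : ℝ, h x b = b ^ 2 / σ'' τ * (σ (x / b + τ) + σ (-x / b + τ) - 2 * σ τ))
    (δ lam : ℝ) (hδ0 : 0 < δ) (hδ2 : δ < 2)
    (hlam0 : 0 < lam) (hlam1 : lam < 1 / (1 + δ / 4))
    (R ν a T : ℝ)
    (hR : R = Real.sqrt (Real.log (1 / lam)))
    (hν : ν = (1 / (n : ℝ)) * Real.log (1 + δ / 4))
    (hT : T = 4 * R ^ 2)
    (ha1 : a ≥ 2 * R / r)
    (ha2 : a ≥ 8 * M * R ^ 3 / (3 * ν * σ'' τ))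
    (ψ : ℝ → ℝ)
    (hψ1 : ∀ x : ℝ, 0 ≤ x → x ≤ T → |ψ x - Real.exp (-x)| ≤ δ / 2 * Real.exp (-x))
    (hψ2 : ∀ x : ℝ, T ≤ x → 0 ≤ ψ x ∧ ψ x ≤ Real.exp (-T) * (1 + δ / 2))
    (g ghat c chat : (Fin n → ℝ) → ℝ)
    (hg : ∀ x, g x = ∑ i, (x i) ^ 2)
    (hghat : ∀ x, ghat x = ∑ i, h (x i) a)
    (hc : ∀ x, c x = Real.exp (-(g x)))
    (hchat : ∀ x, chat x = ψ (ghat x)) :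
    (∀ x : Fin n → ℝ, c x ≥ lam → |chat x - c x| < δ * c x) ∧
    (∀ x : Fin n → ℝ, c x < lam → chat x < lam * (1 + δ)) := by
  subst hT
  obtain ⟨hR₀, hlogR, hexp⟩ := sqrt_log_one_div_spec hlam0 (by linarith) hlam1 hR
  have hν₀ : 0 < ν := hν ▸ mul_pos (by positivity) (Real.log_pos (by linarith))
  have hcard : (Fintype.card (Fin n) : ℝ) * ν = Real.log (1 + δ / 4) := by
    rw [Fintype.card_fin, hν]
    field_simp
  have hmonoOn : MonotoneOn (fun z ↦ σ (z + τ) + σ (-z + τ)) (Ici 0) :=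
    fun x hx y _ hxy ↦ hmono x y hx hxy
  have hφ (x : ℝ) (hx : |x| ≤ 2 * R) : |h x a - x ^ 2| ≤ ν := hh x a ▸
    abs_supernode_sub_sq_le_of_abs_le hder1 hder2 hder3 hbd3 hcurv hr hM.le hR₀ hν₀ ha1 ha2 hx
  have hφ₀ (x : ℝ) : 0 ≤ h x a := hh x a ▸ supernode_nonneg hcurv.le hmonoOn x
  have hφ_mono (x y : ℝ) (hxy : |x| ≤ |y|) : h x a ≤ h y a :=
    hh x a ▸ hh y a ▸ supernode_le_supernode hcurv.le hmonoOn hxy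
  refine ⟨fun x hcx ↦ ?_, fun x hcx ↦ ?_⟩
  · rw [hc, hg, ← hexp, ge_iff_le, Real.exp_le_exp, neg_le_neg_iff] at hcx
    rw [hchat, hghat, hc, hg]
    exact abs_comp_sum_sub_exp_neg_lt hφ hφ₀ hR₀.le hδ0 hδ2 hcard (by linarith [sq_nonneg R]) hψ1 hcx
  · rw [hc, hg, ← hexp, Real.exp_lt_exp, neg_lt_neg_iff] at hcx
    rw [hchat, hghat, ← hexp]
    exact comp_sum_lt_of_lt_sum_sq hφ hφ₀ hφ_mono hR₀.le hν₀.le hδ0 hδ2 hcard hψ1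
      (fun x hx ↦ (hψ2 x hx).2) hcx

/-- Lemma 8 (accuracy of the composed layers): with first-layer range `R = √(log(1/λ))`,
first-layer accuracy `ν = (1/n)·log(1+δ/4)`, second-layer range `T = 4R²` and second-layer
relative accuracy `δ/2`, the composition `ĉ(x) = ψ(ĝ(x))` of the first-layer function
`ĝ(x) = Σᵢ h(xᵢ,a)` with a second-layer supernode `ψ` approximating `exp(−·)` satisfies
`|ĉ(x) − c(x)| < δ·c(x)` whenever `c(x) ≥ λ`, and `ĉ(x) < λ(1+δ)` whenever `c(x) < λ`,
where `c(x) = exp(−‖x‖²)`. -/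
theorem stmt6 (n : ℕ) (hn : 0 < n)
    (σ σ' σ'' σ''' : ℝ → ℝ) (τ r M : ℝ) (hr : 0 < r) (hM : 0 < M)
    (hder1 : ∀ x ∈ Set.Icc (τ - r) (τ + r), HasDerivAt σ (σ' x) x)
    (hder2 : ∀ x ∈ Set.Icc (τ - r) (τ + r), HasDerivAt σ' (σ'' x) x)
    (hder3 : ∀ x ∈ Set.Icc (τ - r) (τ + r), HasDerivAt σ'' (σ''' x) x)
    (hcurv : 0 < σ'' τ)
    (hbd3 : ∀ x ∈ Set.Icc (τ - r) (τ + r), |σ''' x| ≤ M)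
    (hmono : ∀ x y : ℝ, 0 ≤ x → x ≤ y →
      σ (x + τ) + σ (-x + τ) ≤ σ (y + τ) + σ (-y + τ))
    (h : ℝ → ℝ → ℝ)
    (hh : ∀ x b : ℝ, h x b = b ^ 2 / σ'' τ * (σ (x / b + τ) + σ (-x / b + τ) - 2 * σ τ))
    (δ lam : ℝ) (hδ0 : 0 < δ) (hδ2 : δ < 2)
    (hlam0 : 0 < lam) (hlam1 : lam < 1 / (1 + δ / 4))
    (R ν a T : ℝ)
    (hR : R = Real.sqrt (Real.log (1 / lam)))
    (hν : ν = (1 / (n : ℝ)) * Real.log (1 + δ / 4))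
    (hT : T = 4 * R ^ 2)
    (ha1 : a ≥ 2 * R / r)
    (ha2 : a ≥ 8 * M * R ^ 3 / (3 * ν * σ'' τ))
    (ha3 : a ≥ 4 * M * R / (3 * σ'' τ))
    (ψ : ℝ → ℝ)
    (hψ1 : ∀ x : ℝ, 0 ≤ x → x ≤ T → |ψ x - Real.exp (-x)| ≤ δ / 2 * Real.exp (-x))
    (hψ2 : ∀ x : ℝ, T ≤ x → 0 ≤ ψ x ∧ ψ x ≤ Real.exp (-T) * (1 + δ / 2))
    (g ghat c chat : (Fin n → ℝ) → ℝ)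
    (hg : ∀ x, g x = ∑ i, (x i) ^ 2)
    (hghat : ∀ x, ghat x = ∑ i, h (x i) a)
    (hc : ∀ x, c x = Real.exp (-(g x)))
    (hchat : ∀ x, chat x = ψ (ghat x)) :
    (∀ x : Fin n → ℝ, c x ≥ lam → |chat x - c x| < δ * c x) ∧
    (∀ x : Fin n → ℝ, c x < lam → chat x < lam * (1 + δ)) :=
  stmt6_general n hn σ σ' σ'' σ''' τ r M hr hM hder1 hder2 hder3 hcurv hbd3 hmono h hh δ lam hδ0 hδ2
    hlam0 hlam1 R ν a T hR hν hT ha1 ha2 ψ hψ1 hψ2 g ghat c chat hg hghat hc hchat
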